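/- Let τ = (1+√5)/2 and let G be the subgroup of ℍˣ generated by all products p·q, where p and q range over the 30 pure unit quaternions ±i, ±j, ±k and all cyclic permutations of ½(±1·i ± τ·j ± τ⁻¹·k) (so G is the binary icosahedral group 2I with 120 elements). Regard the real quaternions ℍ as a four-dimensional real inner product space with inner product ⟨x,y⟩ = Re(x·conj(y)). Then the underlying set of G is closed under the reflection s_α for every α ∈ G: for all α, v ∈ G, v − 2⟨v,α⟩α ∈ G. Hence the 120 rotors generated by the reflections of the icosahedral group H₃, viewed as vectors in 4-dimensional Euclidean space, form a root system (the root system H₄, the vertices of the 600-cell). -/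

import Mathlib

noncomputable section

/-- The golden ratio `τ = (1+√5)/2`. -/
def τ : ℝ := (1 + Real.sqrt 5) / 2

/-- The quaternion unit `i`. -/
def qi : Quaternion ℝ := ⟨0, 1, 0, 0⟩
/-- The quaternion unit `j`. -/
def qj : Quaternion ℝ := ⟨0, 0, 1, 0⟩
/-- The quaternion unit `k`. -/
def qk : Quaternion ℝ := ⟨0, 0, 0, 1⟩

/-- The sign set `{1, -1}`. -/
def pm : Set ℝ := {1, -1}

/-- The 30 unit roots of `H₃`: `±i, ±j, ±k` together with all cyclic
permutations of the pure quaternions `½(±1·i ± τ·j ± τ⁻¹·k)`. -/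
def rootsH3 : Set (Quaternion ℝ) :=
  {x | (∃ ε ∈ pm, x = ε • qi ∨ x = ε • qj ∨ x = ε • qk) ∨
    (∃ ε₁ ∈ pm, ∃ ε₂ ∈ pm, ∃ ε₃ ∈ pm,
      (x = (2 : ℝ)⁻¹ • (ε₁ • qi + (ε₂ * τ) • qj + (ε₃ * τ⁻¹) • qk) ∨
       x = (2 : ℝ)⁻¹ • ((ε₃ * τ⁻¹) • qi + ε₁ • qj + (ε₂ * τ) • qk) ∨
       x = (2 : ℝ)⁻¹ • ((ε₂ * τ) • qi + (ε₃ * τ⁻¹) • qj + ε₁ • qk)))}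

/-- The set of units of ℍ of the form `p·q` with `p, q` unit roots of `H₃`. -/
def rotorGenH3 : Set (Quaternion ℝ)ˣ :=
  {u | ∃ p ∈ rootsH3, ∃ q ∈ rootsH3, (u : Quaternion ℝ) = p * q}

/-- The underlying set of quaternions of the binary icosahedral group `2I`:
the subgroup of `ℍˣ` generated by all products of pairs of unit roots of
`H₃`, regarded as a set of quaternions. -/
def binaryIcosa : Set (Quaternion ℝ) :=
  (fun u : (Quaternion ℝ)ˣ => (u : Quaternion ℝ)) ''
    ((Subgroup.closure rotorGenH3 : Subgroup (Quaternion ℝ)ˣ) : Set (Quaternion ℝ)ˣ)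

/-- The real inner product `⟨x, y⟩ = Re(x · conj y)` on ℍ ≅ ℝ⁴. -/
def qInner (x y : Quaternion ℝ) : ℝ := (x * star y).re

/-!
Every generator `p * q` is a product of two unit quaternions, so `2I` consists of unit
quaternions, for which `star v = v⁻¹`. For a unit quaternion `α` one has
`2⟨v, α⟩ = v * star α + α * star v`, so the reflection becomes `s_α v = -(α * v⁻¹ * α)`,
a product of elements of `2I` and `-1 = i * i ∈ 2I`.
-/

open Quaternion

lemma tau_eq_goldenRatio : τ = Real.goldenRatio := rfl

lemma one_add_sq_tau_add_sq_inv_tau : 1 + τ ^ 2 + τ⁻¹ ^ 2 = 4 := by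
  rw [tau_eq_goldenRatio, Real.inv_goldenRatio, neg_sq, Real.goldenRatio_sq, Real.goldenConj_sq,
    ← Real.one_sub_goldenConj]
  ring

lemma sq_eq_one_of_mem_pm {ε : ℝ} (hε : ε ∈ pm) : ε ^ 2 = 1 := by
  rcases hε with rfl | rfl <;> norm_num

lemma normSq_qi : normSq qi = 1 := by
  rw [normSq_def']; simp [qi]

lemma normSq_qj : normSq qj = 1 := by
  rw [normSq_def']; simp [qj]

lemma normSq_qk : normSq qk = 1 := by
  rw [normSq_def']; simp [qk]

lemma normSq_smul_qi_add_smul_qj_add_smul_qk (a b c : ℝ) :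
    normSq (a • qi + b • qj + c • qk) = a ^ 2 + b ^ 2 + c ^ 2 := by
  simp only [normSq_def', re_add, imI_add, imJ_add, imK_add, re_smul, imI_smul, imJ_smul, imK_smul]
  simp [qi, qj, qk]

lemma normSq_of_mem_rootsH3 {x : ℍ[ℝ]} (hx : x ∈ rootsH3) : normSq x = 1 := by
  rcases hx with ⟨ε, hε, rfl | rfl | rfl⟩ | ⟨ε₁, h₁, ε₂, h₂, ε₃, h₃, rfl | rfl | rfl⟩ <;>
    simp only [normSq_smul, normSq_qi, normSq_qj, normSq_qk,
      normSq_smul_qi_add_smul_qj_add_smul_qk, mul_pow, sq_eq_one_of_mem_pm, mul_one, one_mul, *]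
  all_goals linear_combination (1 / 4 : ℝ) * one_add_sq_tau_add_sq_inv_tau

lemma qi_mem_rootsH3 : qi ∈ rootsH3 :=
  .inl ⟨1, .inl rfl, .inl (one_smul ℝ qi).symm⟩

lemma qi_mul_qi : qi * qi = -1 := by
  ext <;> simp only [re_mul, imI_mul, imJ_mul, imK_mul] <;> simp [qi]

lemma sub_two_qInner_smul_eq_neg_mul_star_mul {α : ℍ[ℝ]} (hα : normSq α = 1) (v : ℍ[ℝ]) :
    v - (2 * qInner v α) • α = -(α * star v * α) := by
  have two_qInner : ((2 * qInner v α : ℝ) : ℍ[ℝ]) = v * star α + α * star v := by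
    rw [qInner, ← self_add_star', star_mul, star_star]
  rw [← coe_mul_eq_smul, two_qInner, add_mul, mul_assoc v, star_mul_self, hα, coe_one, mul_one]
  abel

lemma star_eq_inv_of_normSq_eq_one {x : ℍ[ℝ]} (hx : normSq x = 1) : star x = x⁻¹ := by
  rw [inv_def, hx, inv_one, one_smul]

lemma normSq_val_eq_one_of_mem_closure {S : Set ℍ[ℝ]ˣ} (hS : ∀ u ∈ S, normSq (u : ℍ[ℝ]) = 1)
    {u : ℍ[ℝ]ˣ} (hu : u ∈ Subgroup.closure S) : normSq (u : ℍ[ℝ]) = 1 := by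
  have hS' : S ⊆ (Units.map (normSq : ℍ[ℝ] →*₀ ℝ).toMonoidHom).ker := fun u hu ↦
    MonoidHom.mem_ker.2 (Units.ext (hS u hu))
  simpa [Units.ext_iff] using MonoidHom.mem_ker.1 (Subgroup.closure_le _ |>.2 hS' hu)

lemma normSq_val_eq_one_of_mem_closure_rotorGenH3 {u : ℍ[ℝ]ˣ}
    (hu : u ∈ Subgroup.closure rotorGenH3) : normSq (u : ℍ[ℝ]) = 1 :=
  normSq_val_eq_one_of_mem_closure (by
    rintro _ ⟨p, hp, q, hq, h⟩
    rw [h, map_mul, normSq_of_mem_rootsH3 hp, normSq_of_mem_rootsH3 hq, one_mul]) hu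

lemma neg_one_mem_closure_rotorGenH3 : (-1 : ℍ[ℝ]ˣ) ∈ Subgroup.closure rotorGenH3 :=
  Subgroup.subset_closure ⟨qi, qi_mem_rootsH3, qi, qi_mem_rootsH3, by rw [qi_mul_qi]; rfl⟩

/-- Regarding ℍ as a four-dimensional real inner product space with
`⟨x,y⟩ = Re(x · conj y)`, the underlying set of the binary icosahedral group
`2I` (the 120 rotors generated by the reflections of the icosahedral group
`H₃`) is closed under the reflection `s_α` for every `α` in the set: for all
`α, v ∈ 2I`, the vector `v − 2⟨v,α⟩α` is again in `2I`. Hence these 120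
rotors, viewed as vectors in 4-dimensional Euclidean space, form a root
system (the root system `H₄`, the vertices of the 600-cell). -/
theorem binaryIcosa_closed_under_reflections :
    ∀ α ∈ binaryIcosa, ∀ v ∈ binaryIcosa,
      v - (2 * qInner v α) • α ∈ binaryIcosa := by
  rintro _ ⟨a, ha, rfl⟩ _ ⟨b, hb, rfl⟩
  refine ⟨-1 * (a * b⁻¹ * a), mul_mem neg_one_mem_closure_rotorGenH3
    (mul_mem (mul_mem ha (inv_mem hb)) ha), ?_⟩
  rw [sub_two_qInner_smul_eq_neg_mul_star_mul (normSq_val_eq_one_of_mem_closure_rotorGenH3 ha),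
    star_eq_inv_of_normSq_eq_one (normSq_val_eq_one_of_mem_closure_rotorGenH3 hb)]
  simp
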